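/- arXiv:1302.5953 — 2 statements merged into one kernel-verified Lean document; each statement's English description precedes it below -/
import Mathlib

section
/- Under Assumption 1, let h ∈ (0,H) and let c = (r,z) : I → ℝ² be a characteristic curve on an interval I with c(t) ∈ (0,R)×(0,H) for all t ∈ I. If Γ(c(t₀)) > g(r_o)·ψ(h) for some t₀ ∈ I, then z(t) ≠ h for all t ∈ I; that is, points whose circulation exceeds the circulation value g(r_o)·ψ(h) at the point (r_o, h) lie in the information void: no characteristic curve through such a point ever reaches the minimum observable height line z = h. (This is one direction of the paper's characterization of the information void K_h.) -/
/-!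
The circulation `Γ = g(r)·ψ(z)` is a first integral of the characteristic system: along a
characteristic curve its derivative is `g'·η·ψ + g·ψ'·ζ = -g'φψ'ψ + rφψ'·g'ψ/r = 0`.
On the line `z = h` the circulation is `g(r)·ψ(h) ≤ g(r_o)·ψ(h)`, so a curve starting above that
value can never meet the line.
-/

open Set

/-- Circulation `Γ(r,z) = r·φ(r)·ψ(z)`. -/
noncomputable def circ (φ ψ : ℝ → ℝ) (p : ℝ × ℝ) : ℝ := p.1 * φ p.1 * ψ p.2

/-- Vertical vorticity `ζ(r,z) = g'(r)·ψ(z)/r` where `g(r) = r·φ(r)`. -/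
noncomputable def zeta (φ ψ : ℝ → ℝ) (r z : ℝ) : ℝ :=
  deriv (fun s => s * φ s) r * ψ z / r

/-- Radial vorticity `η(r,z) = −φ(r)·ψ'(z)`. -/
noncomputable def eta (φ ψ : ℝ → ℝ) (r z : ℝ) : ℝ := -(φ r * deriv ψ z)

/-- A characteristic curve on an interval `I`: a differentiable curve
`c(t) = (r(t), z(t))` with `r(t) > 0` satisfying `r' = η(r,z)`, `z' = ζ(r,z)` on `I`. -/
def IsCharCurve (φ ψ : ℝ → ℝ) (I : Set ℝ) (c : ℝ → ℝ × ℝ) : Prop :=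
  (∀ t ∈ I, 0 < (c t).1) ∧
  ∀ t ∈ I,
    HasDerivWithinAt c
      (eta φ ψ (c t).1 (c t).2, zeta φ ψ (c t).1 (c t).2) I t

theorem Set.OrdConnected.eq_of_hasDerivWithinAt_zero {E : Type*} [NormedAddCommGroup E]
    [NormedSpace ℝ E] {I : Set ℝ} (hI : I.OrdConnected) {f : ℝ → E}
    (hf : ∀ t ∈ I, HasDerivWithinAt f 0 I t) {s t : ℝ} (hs : s ∈ I) (ht : t ∈ I) :
    f s = f t := by
  have := hI.convex.norm_image_sub_le_of_norm_hasDerivWithin_le hf (C := 0) (by simp) ht hs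
  simpa [sub_eq_zero] using this

namespace IsCharCurve

variable {φ ψ : ℝ → ℝ} {I : Set ℝ} {c : ℝ → ℝ × ℝ}

theorem hasDerivWithinAt_circ (hc : IsCharCurve φ ψ I c) (hφ : Differentiable ℝ φ)
    (hψ : Differentiable ℝ ψ) {t : ℝ} (ht : t ∈ I) :
    HasDerivWithinAt (fun u => circ φ ψ (c u)) 0 I t := by
  set r := (c t).1
  set z := (c t).2
  have hr : r ≠ 0 := (hc.1 t ht).ne'
  have hg : HasDerivAt (fun s => s * φ s) (deriv (fun s => s * φ s) r) r :=
    (differentiable_id.mul hφ r).hasDerivAt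
  have hcurve := hc.2 t ht
  have hprod := (hg.comp_hasDerivWithinAt t hcurve.fst).mul
    ((hψ z).hasDerivAt.comp_hasDerivWithinAt t hcurve.snd)
  have hcancel : deriv (fun s => s * φ s) r * eta φ ψ r z * ψ z
      + r * φ r * (deriv ψ z * zeta φ ψ r z) = 0 := by
    simp only [eta, zeta]
    field_simp
    ring
  exact hprod.congr_deriv hcancel

theorem circ_eq (hc : IsCharCurve φ ψ I c) (hI : I.OrdConnected) (hφ : Differentiable ℝ φ)
    (hψ : Differentiable ℝ ψ) {s t : ℝ} (hs : s ∈ I) (ht : t ∈ I) :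
    circ φ ψ (c s) = circ φ ψ (c t) :=
  hI.eq_of_hasDerivWithinAt_zero (fun _ hu => hc.hasDerivWithinAt_circ hφ hψ hu) hs ht

end IsCharCurve

theorem high_circulation_never_reaches_MOH_general
    (R H : ℝ)
    (φ ψ : ℝ → ℝ)
    (hφC2 : ContDiff ℝ 2 φ) (hψC2 : ContDiff ℝ 2 ψ)
    (hψpos : ∀ z ∈ Ioo (0:ℝ) H, 0 < ψ z)
    (r_o : ℝ)
    (hgmax : ∀ r ∈ Ioo (0:ℝ) R, r * φ r ≤ r_o * φ r_o)
    (h : ℝ) (hh : h ∈ Ioo (0:ℝ) H)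
    (I : Set ℝ) (hI : I.OrdConnected)
    (c : ℝ → ℝ × ℝ) (hc : IsCharCurve φ ψ I c)
    (hcin : ∀ t ∈ I, c t ∈ Ioo (0:ℝ) R ×ˢ Ioo (0:ℝ) H)
    (t₀ : ℝ) (ht₀ : t₀ ∈ I)
    (hΓ : circ φ ψ (c t₀) > r_o * φ r_o * ψ h) :
    ∀ t ∈ I, (c t).2 ≠ h := by
  intro t ht hzt
  have hconst := hc.circ_eq hI (hφC2.differentiable (by norm_num))
    (hψC2.differentiable (by norm_num)) ht ht₀
  have hle : circ φ ψ (c t) ≤ r_o * φ r_o * ψ h := by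
    rw [circ, hzt]
    exact mul_le_mul_of_nonneg_right (hgmax _ (hcin t ht).1) (hψpos h hh).le
  linarith

/-- Points whose circulation exceeds the circulation value `g(r_o)·ψ(h)` at `(r_o, h)`
lie in the information void: no characteristic curve through such a point ever reaches
the minimum observable height line `z = h`. -/
theorem high_circulation_never_reaches_MOH
    (R H : ℝ) (hR : 0 < R) (hH : 0 < H)
    (φ ψ : ℝ → ℝ)
    (hφC2 : ContDiff ℝ 2 φ) (hψC2 : ContDiff ℝ 2 ψ)
    (hφ0 : φ 0 = 0) (hψ0 : ψ 0 = 0)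
    (hφpos : ∀ r ∈ Ioo (0:ℝ) R, 0 < φ r)
    (hψpos : ∀ z ∈ Ioo (0:ℝ) H, 0 < ψ z)
    (r_o : ℝ) (hro : r_o ∈ Ioo (0:ℝ) R)
    (z_o : ℝ) (hzo : z_o ∈ Ioo (0:ℝ) H)
    (hg'ro : deriv (fun s => s * φ s) r_o = 0)
    (hg'ne : ∀ r ∈ Ioo (0:ℝ) R, r ≠ r_o → deriv (fun s => s * φ s) r ≠ 0)
    (hψ'zo : deriv ψ z_o = 0)
    (hψ'ne : ∀ z ∈ Ioo (0:ℝ) H, z ≠ z_o → deriv ψ z ≠ 0)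
    (hgmax : ∀ r ∈ Ioo (0:ℝ) R, r * φ r ≤ r_o * φ r_o)
    (hψmax : ∀ z ∈ Ioo (0:ℝ) H, ψ z ≤ ψ z_o)
    (h : ℝ) (hh : h ∈ Ioo (0:ℝ) H)
    (I : Set ℝ) (hI : I.OrdConnected)
    (c : ℝ → ℝ × ℝ) (hc : IsCharCurve φ ψ I c)
    (hcin : ∀ t ∈ I, c t ∈ Ioo (0:ℝ) R ×ˢ Ioo (0:ℝ) H)
    (t₀ : ℝ) (ht₀ : t₀ ∈ I)
    (hΓ : circ φ ψ (c t₀) > r_o * φ r_o * ψ h) :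
    ∀ t ∈ I, (c t).2 ≠ h :=
  high_circulation_never_reaches_MOH_general R H φ ψ hφC2 hψC2 hψpos r_o hgmax h hh I hI c hc hcin
    t₀ ht₀ hΓ
end

section
/- Under Assumption 1, let h satisfy z_o < h < H and let δ satisfy 0 < δ < R/2 and δ < h. If c : [0,∞) → ℝ² is a characteristic curve with c(t) ∈ [δ, R−δ] × [δ, h] for all t ≥ 0 (i.e., the curve is trapped below the minimum observable height for all forward time), then Γ(c(0)) ≥ g(r_o)·ψ(h). (This is the other direction of the paper's characterization of the information void K_h: only points whose circulation is at least the circulation value at (r_o, h) can fail to reach the line z = h.) -/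
/-!
The circulation `Γ = g(r) ψ(z)` is a first integral of the characteristic flow. If
`Γ(c 0) < g(r_o) ψ(h)`, the curve stays in the compact set `S` of points of the box on the level
`Γ = Γ(c 0)`. Since `ψ` decreases on `[z_o, h]`, `Γ ≥ g(r_o) ψ(h)` on the segment
`{r_o} × [z_o, h]`, so `S` misses both this segment and the centre `(r_o, z_o)`. Because `g` and
`ψ` peak at `r_o` and `z_o`, the field `(η, ζ)` turns clockwise about the centre, and by
compactness its angular velocity on `S` is at most some `-k < 0`. The angle of
`c t - (r_o, z_o)` then decreases without bound, so the curve must cross the ray above the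
centre, which it cannot do inside `S`.
-/

open Set

lemma deriv_pos_of_forall_le_right {f : ℝ → ℝ} {a m : ℝ} (hf : DifferentiableOn ℝ f (Ioc a m))
    (hne : ∀ x ∈ Ioo a m, deriv f x ≠ 0) (hle : ∀ x ∈ Ioo a m, f x ≤ f m) :
    ∀ x ∈ Ioo a m, 0 < deriv f x := by
  have hderiv : ∀ x ∈ Ioo a m, HasDerivWithinAt f (deriv f x) (Ioo a m) x := fun x hx =>
    ((hf x (Ioo_subset_Ioc_self hx)).differentiableAt (Filter.mem_of_superset
      (Ioo_mem_nhds hx.1 hx.2) Ioo_subset_Ioc_self)).hasDerivAt.hasDerivWithinAt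
  intro x hx
  refine (hasDerivWithinAt_forall_lt_or_forall_gt_of_forall_ne (convex_Ioo a m) hderiv hne
    |>.resolve_left fun hneg => ?_) x hx
  have hanti : StrictAntiOn f (Icc x m) :=
    strictAntiOn_of_deriv_neg (convex_Icc x m) (hf.continuousOn.mono (Icc_subset_Ioc hx.1 le_rfl))
      fun y hy => by rw [interior_Icc] at hy; exact hneg y ⟨hx.1.trans hy.1, hy.2⟩
  exact (hle x hx).not_gt (hanti (left_mem_Icc.2 hx.2.le) (right_mem_Icc.2 hx.2.le) hx.2)

lemma deriv_neg_of_forall_le_left {f : ℝ → ℝ} {m b : ℝ} (hf : DifferentiableOn ℝ f (Ico m b))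
    (hne : ∀ x ∈ Ioo m b, deriv f x ≠ 0) (hle : ∀ x ∈ Ioo m b, f x ≤ f m) :
    ∀ x ∈ Ioo m b, deriv f x < 0 := by
  have hderiv : ∀ x ∈ Ioo m b, HasDerivWithinAt f (deriv f x) (Ioo m b) x := fun x hx =>
    ((hf x (Ioo_subset_Ico_self hx)).differentiableAt (Filter.mem_of_superset
      (Ioo_mem_nhds hx.1 hx.2) Ioo_subset_Ico_self)).hasDerivAt.hasDerivWithinAt
  intro x hx
  refine (hasDerivWithinAt_forall_lt_or_forall_gt_of_forall_ne (convex_Ioo m b) hderiv hne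
    |>.resolve_right fun hpos => ?_) x hx
  have hmono : StrictMonoOn f (Icc m x) :=
    strictMonoOn_of_deriv_pos (convex_Icc m x) (hf.continuousOn.mono (Icc_subset_Ico le_rfl hx.2))
      fun y hy => by rw [interior_Icc] at hy; exact hpos y ⟨hy.1, hy.2.trans hx.2⟩
  exact (hle x hx).not_gt (hmono (left_mem_Icc.2 hx.1.le) (right_mem_Icc.2 hx.1.le) hx.1)

lemma sub_mul_deriv_neg_of_forall_le {f : ℝ → ℝ} {a b m : ℝ} (hf : DifferentiableOn ℝ f (Ioo a b))
    (hm : m ∈ Ioo a b) (hne : ∀ x ∈ Ioo a b, x ≠ m → deriv f x ≠ 0)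
    (hle : ∀ x ∈ Ioo a b, f x ≤ f m) {x : ℝ} (hx : x ∈ Ioo a b) (hxm : x ≠ m) :
    (x - m) * deriv f x < 0 := by
  rcases hxm.lt_or_gt with hxm | hxm
  · have hsub : Ioc a m ⊆ Ioo a b := Ioc_subset_Ioo_right hm.2
    refine mul_neg_of_neg_of_pos (sub_neg.2 hxm) (deriv_pos_of_forall_le_right (hf.mono hsub)
      (fun y hy => hne y (hsub (Ioo_subset_Ioc_self hy)) hy.2.ne)
      (fun y hy => hle y (hsub (Ioo_subset_Ioc_self hy))) x ⟨hx.1, hxm⟩)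
  · have hsub : Ico m b ⊆ Ioo a b := Ico_subset_Ioo_left hm.1
    refine mul_neg_of_pos_of_neg (sub_pos.2 hxm) (deriv_neg_of_forall_le_left (hf.mono hsub)
      (fun y hy => hne y (hsub (Ioo_subset_Ico_self hy)) hy.1.ne')
      (fun y hy => hle y (hsub (Ioo_subset_Ico_self hy))) x ⟨hxm, hx.2⟩)

open Complex in
lemma exists_notMem_slitPlane_of_im_div_le {w w' : ℝ → ℂ} {k : ℝ} (hk : 0 < k)
    (hw : ∀ t ∈ Ici (0:ℝ), HasDerivWithinAt w (w' t) (Ici 0) t)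
    (hrot : ∀ t ∈ Ici (0:ℝ), (w' t / w t).im ≤ -k) :
    ∃ t ∈ Ici (0:ℝ), w t ∉ slitPlane := by
  by_contra! hslit
  -- `arg (w t) = (log (w t)).im` stays in `(-π, π]` but decreases at rate at least `k`
  set T := (2 * Real.pi + 1) / k
  have hT : 0 ≤ T := by positivity
  have harg : ∀ t ∈ Ici (0:ℝ),
      HasDerivWithinAt (fun s => (log (w s)).im) (w' t / w t).im (Ici 0) t := fun t ht =>
    imCLM.hasFDerivAt.comp_hasDerivWithinAt t ((hw t ht).clog_real (hslit t ht))
  have hdecay := image_le_of_deriv_right_le_deriv_boundary (a := 0) (b := T)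
    (B := fun s => (log (w 0)).im - k * s) (B' := fun _ => -k)
    (fun s hs => (harg s hs.1).continuousWithinAt.mono Icc_subset_Ici_self)
    (fun s hs => (harg s hs.1).mono (Ici_subset_Ici.2 hs.1)) (by simp)
    (by fun_prop) (fun s _ => by simpa using ((hasDerivWithinAt_id s _).const_mul k).const_sub _)
    (fun s hs => hrot s hs.1) (right_mem_Icc.2 hT)
  have hkT : k * T = 2 * Real.pi + 1 := mul_div_cancel₀ _ hk.ne'
  linarith [neg_pi_lt_log_im (w T), log_im_le_pi (w 0)]

/-- Angular velocity about the origin of a point at `u` moving with velocity `v`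
(junk value `0` at `u = 0`). -/
noncomputable def angularVelocity (u v : ℝ × ℝ) : ℝ :=
  (u.1 * v.2 - u.2 * v.1) / (u.1 ^ 2 + u.2 ^ 2)

open Complex in
lemma angularVelocity_eq_im_div (u v : ℝ × ℝ) :
    angularVelocity u v = (equivRealProdCLM.symm v / equivRealProdCLM.symm u).im := by
  simp only [angularVelocity, equivRealProdCLM_symm_apply, div_im, normSq_add_mul_I, add_re,
    add_im, ofReal_re, ofReal_im, mul_I_re, mul_I_im]
  ring

open Complex in
lemma exists_mem_upper_ray_of_angularVelocity_le {u v : ℝ → ℝ × ℝ} {k : ℝ} (hk : 0 < k)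
    (hu : ∀ t ∈ Ici (0:ℝ), HasDerivWithinAt u (v t) (Ici 0) t)
    (hrot : ∀ t ∈ Ici (0:ℝ), angularVelocity (u t) (v t) ≤ -k) :
    ∃ t ∈ Ici (0:ℝ), (u t).1 = 0 ∧ 0 ≤ (u t).2 := by
  -- multiplying by `I` turns the ray `{(0, y) | y ≥ 0}` into the slit `(-∞, 0]`
  obtain ⟨t, ht, hslit⟩ := exists_notMem_slitPlane_of_im_div_le hk
    (w := fun t => I * equivRealProdCLM.symm (u t)) (w' := fun t => I * equivRealProdCLM.symm (v t))
    (fun t ht => (equivRealProdCLM.symm.hasFDerivAt.comp_hasDerivWithinAt t (hu t ht)).const_mul I)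
    (fun t ht => by
      rw [mul_div_mul_left _ _ I_ne_zero, ← angularVelocity_eq_im_div]
      exact hrot t ht)
  refine ⟨t, ht, ?_⟩
  simpa [mem_slitPlane_iff, equivRealProdCLM_symm_apply, and_comm] using hslit

lemma ContinuousOn.angularVelocity {α : Type*} [TopologicalSpace α] {u v : α → ℝ × ℝ} {s : Set α}
    (hu : ContinuousOn u s) (hv : ContinuousOn v s) (h0 : ∀ x ∈ s, u x ≠ 0) :
    ContinuousOn (fun x => angularVelocity (u x) (v x)) s := by
  refine ContinuousOn.div (by fun_prop) (by fun_prop) fun x hx hsq => h0 x hx ?_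
  have h1 : (u x).1 = 0 := by nlinarith [sq_nonneg (u x).1, sq_nonneg (u x).2]
  have h2 : (u x).2 = 0 := by nlinarith [sq_nonneg (u x).1, sq_nonneg (u x).2]
  exact Prod.ext h1 h2

noncomputable def charField (φ ψ : ℝ → ℝ) (p : ℝ × ℝ) : ℝ × ℝ :=
  (eta φ ψ p.1 p.2, zeta φ ψ p.1 p.2)

section CharField

variable {φ ψ : ℝ → ℝ} {I : Set ℝ} {c : ℝ → ℝ × ℝ}

lemma IsCharCurve.hasDerivWithinAt_circ_s5 (hφ : Differentiable ℝ φ) (hψ : Differentiable ℝ ψ)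
    (hc : IsCharCurve φ ψ I c) {t : ℝ} (ht : t ∈ I) :
    HasDerivWithinAt (fun s => circ φ ψ (c s)) 0 I t := by
  have hr : HasDerivWithinAt (fun s => (c s).1) (eta φ ψ (c t).1 (c t).2) I t :=
    (ContinuousLinearMap.fst ℝ ℝ ℝ).hasFDerivAt.comp_hasDerivWithinAt t (hc.2 t ht)
  have hz : HasDerivWithinAt (fun s => (c s).2) (zeta φ ψ (c t).1 (c t).2) I t :=
    (ContinuousLinearMap.snd ℝ ℝ ℝ).hasFDerivAt.comp_hasDerivWithinAt t (hc.2 t ht)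
  have hg : HasDerivAt (fun s => s * φ s) (deriv (fun s => s * φ s) (c t).1) (c t).1 :=
    ((differentiable_id.mul hφ) _).hasDerivAt
  have hcancel : deriv (fun s => s * φ s) (c t).1 * eta φ ψ (c t).1 (c t).2 * ψ (c t).2
      + (c t).1 * φ (c t).1 * (deriv ψ (c t).2 * zeta φ ψ (c t).1 (c t).2) = 0 := by
    have := (hc.1 t ht).ne'
    simp only [eta, zeta]
    field_simp
    ring
  exact ((hg.comp_hasDerivWithinAt t hr).mul
    ((hψ _).hasDerivAt.comp_hasDerivWithinAt t hz)).congr_deriv hcancel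

lemma IsCharCurve.circ_eq_s5 {a : ℝ} (hφ : Differentiable ℝ φ) (hψ : Differentiable ℝ ψ)
    (hc : IsCharCurve φ ψ (Ici a) c) {t : ℝ} (ht : t ∈ Ici a) :
    circ φ ψ (c t) = circ φ ψ (c a) :=
  constant_of_has_deriv_right_zero
    (fun _ hs => (hc.hasDerivWithinAt_circ_s5 hφ hψ hs.1).continuousWithinAt.mono Icc_subset_Ici_self)
    (fun _ hs => (hc.hasDerivWithinAt_circ_s5 hφ hψ hs.1).mono (Ici_subset_Ici.2 hs.1)) t ⟨ht, le_rfl⟩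

lemma continuousOn_charField (hφ : ContDiff ℝ 1 φ) (hψ : ContDiff ℝ 1 ψ) :
    ContinuousOn (charField φ ψ) {p | p.1 ≠ 0} := by
  have hg' : Continuous (deriv fun s => s * φ s) := (contDiff_id.mul hφ).continuous_deriv le_rfl
  have hψ' : Continuous (deriv ψ) := hψ.continuous_deriv le_rfl
  have hφc := hφ.continuous
  have hψc := hψ.continuous
  refine ContinuousOn.prodMk (by unfold eta; fun_prop) ?_
  exact ContinuousOn.div (by fun_prop) (by fun_prop) fun p hp => hp

lemma angularVelocity_charField_neg {r_o z_o : ℝ} {p : ℝ × ℝ} (hr : 0 < p.1) (hφ : 0 < φ p.1)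
    (hψ : 0 < ψ p.2) (hg' : p.1 ≠ r_o → (p.1 - r_o) * deriv (fun s => s * φ s) p.1 < 0)
    (hψ' : p.2 ≠ z_o → (p.2 - z_o) * deriv ψ p.2 < 0) (hp : p ≠ (r_o, z_o)) :
    angularVelocity (p - (r_o, z_o)) (charField φ ψ p) < 0 := by
  have hsplit : (p - (r_o, z_o)).1 * (charField φ ψ p).2 - (p - (r_o, z_o)).2 * (charField φ ψ p).1
      = (p.1 - r_o) * deriv (fun s => s * φ s) p.1 * (ψ p.2 / p.1)
        + (p.2 - z_o) * deriv ψ p.2 * φ p.1 := by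
    simp only [charField, eta, zeta, Prod.fst_sub, Prod.snd_sub]
    ring
  have hpo : p.1 - r_o ≠ 0 ∨ p.2 - z_o ≠ 0 := by
    by_contra! h
    exact hp (Prod.ext (sub_eq_zero.1 h.1) (sub_eq_zero.1 h.2))
  unfold angularVelocity
  rw [hsplit]
  refine div_neg_of_neg_of_pos ?_ ?_
  · have hψterm : (p.2 - z_o) * deriv ψ p.2 * φ p.1 ≤ 0 := by
      refine mul_nonpos_of_nonpos_of_nonneg ?_ hφ.le
      rcases eq_or_ne p.2 z_o with h2 | h2
      · simp [h2]
      · exact (hψ' h2).le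
    rcases eq_or_ne p.1 r_o with h1 | h1
    · rw [sub_eq_zero.2 h1, zero_mul, zero_mul, zero_add]
      exact mul_neg_of_neg_of_pos (hψ' fun h2 => hp (Prod.ext h1 h2)) hφ
    · linarith [mul_neg_of_neg_of_pos (hg' h1) (div_pos hψ hr)]
  · simp only [Prod.fst_sub, Prod.snd_sub]
    rcases hpo with h | h <;> positivity

lemma mul_le_circ_of_deriv_neg {r_o z_o h z : ℝ} (hg : 0 ≤ r_o * φ r_o)
    (hψc : ContinuousOn ψ (Icc z_o h)) (hψ' : ∀ y ∈ Ioo z_o h, deriv ψ y < 0)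
    (hz : z ∈ Icc z_o h) : r_o * φ r_o * ψ h ≤ circ φ ψ (r_o, z) := by
  have hanti : AntitoneOn ψ (Icc z_o h) :=
    (strictAntiOn_of_deriv_neg (convex_Icc _ _) hψc (by rwa [interior_Icc])).antitoneOn
  exact mul_le_mul_of_nonneg_left (hanti hz (right_mem_Icc.2 (hz.1.trans hz.2)) hz.2) hg

lemma IsCharCurve.exists_on_upper_ray_of_trapped {R H r_o z_o : ℝ} {K : Set (ℝ × ℝ)}
    (hφ : ContDiff ℝ 1 φ) (hψ : ContDiff ℝ 1 ψ)
    (hφpos : ∀ r ∈ Ioo 0 R, 0 < φ r) (hψpos : ∀ z ∈ Ioo 0 H, 0 < ψ z)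
    (hg' : ∀ r ∈ Ioo 0 R, r ≠ r_o → (r - r_o) * deriv (fun s => s * φ s) r < 0)
    (hψ' : ∀ z ∈ Ioo 0 H, z ≠ z_o → (z - z_o) * deriv ψ z < 0)
    (hK : IsCompact K) (hKsub : K ⊆ Ioo 0 R ×ˢ Ioo 0 H) (hKo : (r_o, z_o) ∉ K)
    (hc : IsCharCurve φ ψ (Ici 0) c) (hcK : ∀ t ∈ Ici (0:ℝ), c t ∈ K) :
    ∃ t ∈ Ici (0:ℝ), (c t).1 = r_o ∧ z_o ≤ (c t).2 := by
  have hKo' : ∀ p ∈ K, p - (r_o, z_o) ≠ 0 := fun p hp h => hKo (sub_eq_zero.1 h ▸ hp)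
  have hneg : ∀ p ∈ K, angularVelocity (p - (r_o, z_o)) (charField φ ψ p) < 0 := fun p hp =>
    have hp' := hKsub hp
    angularVelocity_charField_neg hp'.1.1 (hφpos _ hp'.1) (hψpos _ hp'.2) (hg' _ hp'.1)
      (hψ' _ hp'.2) (sub_ne_zero.1 (hKo' p hp))
  obtain ⟨k, hk, hbound⟩ := hK.exists_forall_le' (a := 0)
    (f := fun p => -angularVelocity (p - (r_o, z_o)) (charField φ ψ p))
    (ContinuousOn.angularVelocity (continuousOn_id.sub continuousOn_const)
      ((continuousOn_charField hφ hψ).mono fun p hp => (hKsub hp).1.1.ne') hKo').neg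
    fun p hp => neg_pos.2 (hneg p hp)
  obtain ⟨t, ht, hr, hz⟩ := exists_mem_upper_ray_of_angularVelocity_le hk
    (u := fun t => c t - (r_o, z_o)) (v := fun t => charField φ ψ (c t))
    (fun t ht => (hc.2 t ht).sub_const _) fun t ht => le_neg.1 (hbound _ (hcK t ht))
  exact ⟨t, ht, by simpa [sub_eq_zero] using hr, by simpa using hz⟩

end CharField

theorem trapped_curve_has_high_circulation_general
    (R H : ℝ)
    (φ ψ : ℝ → ℝ)
    (hφC2 : ContDiff ℝ 2 φ) (hψC2 : ContDiff ℝ 2 ψ)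
    (hφpos : ∀ r ∈ Ioo (0:ℝ) R, 0 < φ r)
    (hψpos : ∀ z ∈ Ioo (0:ℝ) H, 0 < ψ z)
    (r_o : ℝ) (hro : r_o ∈ Ioo (0:ℝ) R)
    (z_o : ℝ) (hzo : z_o ∈ Ioo (0:ℝ) H)
    (hg'ne : ∀ r ∈ Ioo (0:ℝ) R, r ≠ r_o → deriv (fun s => s * φ s) r ≠ 0)
    (hψ'ne : ∀ z ∈ Ioo (0:ℝ) H, z ≠ z_o → deriv ψ z ≠ 0)
    (hgmax : ∀ r ∈ Ioo (0:ℝ) R, r * φ r ≤ r_o * φ r_o)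
    (hψmax : ∀ z ∈ Ioo (0:ℝ) H, ψ z ≤ ψ z_o)
    (h : ℝ) (hhH : h < H)
    (δ : ℝ) (hδ : 0 < δ)
    (c : ℝ → ℝ × ℝ) (hc : IsCharCurve φ ψ (Ici 0) c)
    (htrap : ∀ t ∈ Ici (0:ℝ), c t ∈ Icc δ (R - δ) ×ˢ Icc δ h) :
    r_o * φ r_o * ψ h ≤ circ φ ψ (c 0) := by
  by_contra! hlow
  have hφ1 : ContDiff ℝ 1 φ := hφC2.of_le one_le_two
  have hψ1 : ContDiff ℝ 1 ψ := hψC2.of_le one_le_two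
  have hg' : ∀ r ∈ Ioo 0 R, r ≠ r_o → (r - r_o) * deriv (fun s => s * φ s) r < 0 :=
    fun r hr => sub_mul_deriv_neg_of_forall_le
      ((contDiff_id.mul hφ1).differentiable one_ne_zero).differentiableOn hro hg'ne hgmax hr
  have hψ' : ∀ z ∈ Ioo 0 H, z ≠ z_o → (z - z_o) * deriv ψ z < 0 :=
    fun z hz => sub_mul_deriv_neg_of_forall_le
      (hψ1.differentiable one_ne_zero).differentiableOn hzo hψ'ne hψmax hz
  set S := (Icc δ (R - δ) ×ˢ Icc δ h) ∩ {p | circ φ ψ p = circ φ ψ (c 0)}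
  have hSray : ∀ p ∈ S, p.1 = r_o → z_o ≤ p.2 → False := by
    rintro ⟨r, z⟩ ⟨⟨-, -, hz⟩, hlevel⟩ (rfl : r = r_o) hzo_le
    refine hlow.not_ge (hlevel ▸ mul_le_circ_of_deriv_neg (mul_pos hro.1 (hφpos _ hro)).le
      hψ1.continuous.continuousOn (fun y hy => ?_) ⟨hzo_le, hz⟩)
    exact neg_of_mul_neg_right (hψ' y ⟨hzo.1.trans hy.1, hy.2.trans hhH⟩ hy.1.ne')
      (sub_pos.2 hy.1).le
  have hcS : ∀ t ∈ Ici 0, c t ∈ S := fun t ht =>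
    ⟨htrap t ht, hc.circ_eq_s5 (hφ1.differentiable one_ne_zero) (hψ1.differentiable one_ne_zero) ht⟩
  obtain ⟨t, ht, hr, hz⟩ := hc.exists_on_upper_ray_of_trapped hφ1 hψ1 hφpos hψpos hg' hψ'
    ((isCompact_Icc.prod isCompact_Icc).inter_right
      (isClosed_eq (by unfold circ; fun_prop) continuous_const))
    (fun p ⟨⟨⟨hr1, hr2⟩, hz1, hz2⟩, _⟩ => ⟨⟨by linarith, by linarith⟩, by linarith, by linarith⟩)
    (fun hS => hSray _ hS rfl le_rfl) hcS
  exact hSray _ (hcS t ht) hr hz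

/-- Only points whose circulation is at least the circulation value `g(r_o)·ψ(h)` at
`(r_o, h)` can fail to reach the minimum observable height line `z = h`: a characteristic
curve trapped in `[δ, R−δ] × [δ, h]` for all forward time starts at a point with
circulation `≥ g(r_o)·ψ(h)`. -/
theorem trapped_curve_has_high_circulation
    (R H : ℝ) (hR : 0 < R) (hH : 0 < H)
    (φ ψ : ℝ → ℝ)
    (hφC2 : ContDiff ℝ 2 φ) (hψC2 : ContDiff ℝ 2 ψ)
    (hφ0 : φ 0 = 0) (hψ0 : ψ 0 = 0)
    (hφpos : ∀ r ∈ Ioo (0:ℝ) R, 0 < φ r)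
    (hψpos : ∀ z ∈ Ioo (0:ℝ) H, 0 < ψ z)
    (r_o : ℝ) (hro : r_o ∈ Ioo (0:ℝ) R)
    (z_o : ℝ) (hzo : z_o ∈ Ioo (0:ℝ) H)
    (hg'ro : deriv (fun s => s * φ s) r_o = 0)
    (hg'ne : ∀ r ∈ Ioo (0:ℝ) R, r ≠ r_o → deriv (fun s => s * φ s) r ≠ 0)
    (hψ'zo : deriv ψ z_o = 0)
    (hψ'ne : ∀ z ∈ Ioo (0:ℝ) H, z ≠ z_o → deriv ψ z ≠ 0)
    (hgmax : ∀ r ∈ Ioo (0:ℝ) R, r * φ r ≤ r_o * φ r_o)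
    (hψmax : ∀ z ∈ Ioo (0:ℝ) H, ψ z ≤ ψ z_o)
    (h : ℝ) (hzoh : z_o < h) (hhH : h < H)
    (δ : ℝ) (hδ : 0 < δ) (hδR : δ < R / 2) (hδh : δ < h)
    (c : ℝ → ℝ × ℝ) (hc : IsCharCurve φ ψ (Ici 0) c)
    (htrap : ∀ t ∈ Ici (0:ℝ), c t ∈ Icc δ (R - δ) ×ˢ Icc δ h) :
    r_o * φ r_o * ψ h ≤ circ φ ψ (c 0) :=
  trapped_curve_has_high_circulation_general R H φ ψ hφC2 hψC2 hφpos hψpos r_o hro z_o hzo hg'ne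
    hψ'ne hgmax hψmax h hhH δ hδ c hc htrap
end
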